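/- (Dual certificate optimality) Let D = L₀ + S₀ with L₀ = UΣV* a reduced SVD, T = {UX* + YV*}, Ω = supp(S₀). Assume λ < 1 − α and ‖P_Ω P_T‖ ≤ 1 − ε for some α, ε ∈ (0,1) with 1/2 − (1−ε)ε > 0 and (1−α) − λε > 0. If there exists a pair (W, F) with P_T W = 0, ‖W‖ ≤ α, P_Ω F = 0, ‖F‖_∞ ≤ 1/2, and a matrix Δ = P_Ω Δ with ‖Δ‖_F ≤ ε² such that UV* + W = λ(sgn(S₀) + F + Δ), then (L₀, S₀) is the unique minimizer of ‖L‖_* + λ‖S‖₁ subject to L + S = D. -/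

import Mathlib

open Matrix

noncomputable def frobInner {n : ℕ} (A B : Matrix (Fin n) (Fin n) ℝ) : ℝ :=
  Matrix.trace (Aᵀ * B)

noncomputable def matSpectralNorm {n : ℕ} (A : Matrix (Fin n) (Fin n) ℝ) : ℝ :=
  ‖Matrix.toEuclideanCLM (𝕜 := ℝ) A‖

noncomputable def nuclearNorm {n : ℕ} (A : Matrix (Fin n) (Fin n) ℝ) : ℝ :=
  ∑ i, Real.sqrt ((Matrix.isHermitian_conjTranspose_mul_self A).eigenvalues i)

noncomputable def l1Norm {n : ℕ} (A : Matrix (Fin n) (Fin n) ℝ) : ℝ :=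
  ∑ i, ∑ j, |A i j|

noncomputable def signMatrix {n : ℕ} (A : Matrix (Fin n) (Fin n) ℝ) :
    Matrix (Fin n) (Fin n) ℝ :=
  Matrix.of fun i j => Real.sign (A i j)

def projSupp {n : ℕ} (Ω : Set (Fin n × Fin n)) [DecidablePred (· ∈ Ω)]
    (M : Matrix (Fin n) (Fin n) ℝ) : Matrix (Fin n) (Fin n) ℝ :=
  Matrix.of fun i j => if (i, j) ∈ Ω then M i j else 0

def projT {n r : ℕ} (U V : Matrix (Fin n) (Fin r) ℝ)
    (M : Matrix (Fin n) (Fin n) ℝ) : Matrix (Fin n) (Fin n) ℝ :=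
  U * Uᵀ * M + M * (V * Vᵀ) - U * Uᵀ * M * (V * Vᵀ)


noncomputable def frobNorm {n : ℕ} (A : Matrix (Fin n) (Fin n) ℝ) : ℝ :=
  Real.sqrt (∑ i, ∑ j, (A i j) ^ 2)

/-!
Put `H = L - L₀`, so that `S = S₀ - H`. The subgradient inequalities of the nuclear norm at `L₀`
(with the subgradient `U Vᵀ + W₀`, where `W₀ ⊥ T` attains `‖P_T⊥ H‖_*`) and of the `ℓ¹` norm at
`S₀`, combined with the certificate identity, give
`‖L₀ + H‖_* + λ‖S₀ - H‖₁ ≥ ‖L₀‖_* + λ‖S₀‖₁ + (1 - α - λε)‖P_T⊥ H‖_* + λ(1/2 - (1 - ε)ε)‖P_Ω⊥ H‖₁`;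
the residual `Δ` is absorbed through `ε‖P_Ω H‖_F ≤ (1 - ε)‖P_Ω⊥ H‖₁ + ‖P_T⊥ H‖_*`, a consequence of
`‖P_Ω P_T‖ ≤ 1 - ε`. Both coefficients are positive, and both norms vanish only if `H ∈ T` is
supported on `Ω`, which forces `H = 0` because `‖P_Ω P_T‖ < 1`.

The duality `⟨Q, A⟩ ≤ ‖Q‖ ‖A‖_*`, and a dual matrix attaining it, come from the polar
decomposition of `A`, built from an eigendecomposition of `Aᵀ A`.
-/

open scoped Matrix.Norms.L2Operator

lemma EuclideanSpace.norm_toLp_sq {n : Type*} [Fintype n] (x : n → ℝ) :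
    ‖(WithLp.toLp 2 x : EuclideanSpace ℝ n)‖ ^ 2 = x ⬝ᵥ x := by
  rw [EuclideanSpace.real_norm_sq_eq]; simp only [dotProduct, sq]

namespace Matrix

variable {l m n : Type*} [Fintype l] [Fintype m] [Fintype n]

lemma mulVec_dotProduct_mulVec (A : Matrix m n ℝ) (B : Matrix m l ℝ) (x : n → ℝ) (y : l → ℝ) :
    (A *ᵥ x) ⬝ᵥ (B *ᵥ y) = x ⬝ᵥ ((Aᵀ * B) *ᵥ y) := by
  rw [dotProduct_mulVec, dotProduct_mulVec, ← vecMul_vecMul, vecMul_transpose]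

lemma norm_le_one_iff_dotProduct [DecidableEq n] (M : Matrix m n ℝ) :
    ‖M‖ ≤ 1 ↔ ∀ x, (M *ᵥ x) ⬝ᵥ (M *ᵥ x) ≤ x ⬝ᵥ x := by
  constructor
  · intro hM x
    have h := (l2_opNorm_mulVec M (WithLp.toLp 2 x)).trans
      (mul_le_of_le_one_left (norm_nonneg _) hM)
    rw [← EuclideanSpace.norm_toLp_sq, ← EuclideanSpace.norm_toLp_sq]
    exact pow_le_pow_left₀ (norm_nonneg _) h 2
  · intro h
    refine ContinuousLinearMap.opNorm_le_bound _ zero_le_one fun x => ?_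
    rw [one_mul, ← pow_le_pow_iff_left₀ (norm_nonneg _) (norm_nonneg _) two_ne_zero]
    have := h x.ofLp
    rwa [← EuclideanSpace.norm_toLp_sq, ← EuclideanSpace.norm_toLp_sq] at this

lemma norm_le_one_of_transpose_mul_self_eq_one [DecidableEq n] {U : Matrix m n ℝ}
    (hU : Uᵀ * U = 1) : ‖U‖ ≤ 1 :=
  (norm_le_one_iff_dotProduct U).2 fun x => by rw [mulVec_dotProduct_mulVec, hU, one_mulVec]

lemma norm_transpose_mul_mul_le [DecidableEq l] [DecidableEq m] [DecidableEq n]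
    {U : Matrix m l ℝ} {V : Matrix n l ℝ} (hU : Uᵀ * U = 1) (hV : Vᵀ * V = 1)
    (M : Matrix m n ℝ) : ‖Uᵀ * M * V‖ ≤ ‖M‖ := by
  have hUt : ‖Uᵀ‖ ≤ 1 := by
    rw [← conjTranspose_eq_transpose_of_trivial, l2_opNorm_conjTranspose]
    exact norm_le_one_of_transpose_mul_self_eq_one hU
  calc ‖Uᵀ * M * V‖ ≤ ‖Uᵀ‖ * ‖M‖ * ‖V‖ :=
        (l2_opNorm_mul _ _).trans (by gcongr; exact l2_opNorm_mul _ _)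
    _ ≤ 1 * ‖M‖ * 1 := by
        gcongr; exact norm_le_one_of_transpose_mul_self_eq_one hV
    _ = ‖M‖ := by ring

lemma norm_mul_transpose_add_le_one [DecidableEq l] [DecidableEq n]
    {U : Matrix m l ℝ} {V : Matrix n l ℝ} {W : Matrix m n ℝ}
    (hU : Uᵀ * U = 1) (hV : Vᵀ * V = 1) (hUW : Uᵀ * W = 0) (hWV : W * V = 0) (hW : ‖W‖ ≤ 1) :
    ‖U * Vᵀ + W‖ ≤ 1 := by
  rw [norm_le_one_iff_dotProduct] at hW ⊢
  intro x
  set a := Vᵀ *ᵥ x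
  set y := x - V *ᵥ a
  have hWx : W *ᵥ x = W *ᵥ y := by
    rw [mulVec_sub, mulVec_mulVec, hWV, zero_mulVec, sub_zero]
  have hxVa : x ⬝ᵥ (V *ᵥ a) = a ⬝ᵥ a := by
    rw [dotProduct_mulVec, ← mulVec_transpose]
  have hy : y ⬝ᵥ y = x ⬝ᵥ x - a ⬝ᵥ a := by
    have hVa : (V *ᵥ a) ⬝ᵥ (V *ᵥ a) = a ⬝ᵥ a := by
      rw [mulVec_dotProduct_mulVec, hV, one_mulVec]
    simp only [y, sub_dotProduct, dotProduct_sub, hVa, hxVa, dotProduct_comm (V *ᵥ a) x]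
    ring
  have hUa : (U *ᵥ a) ⬝ᵥ (U *ᵥ a) = a ⬝ᵥ a := by
    rw [mulVec_dotProduct_mulVec, hU, one_mulVec]
  have hcross : (U *ᵥ a) ⬝ᵥ (W *ᵥ y) = 0 := by
    rw [mulVec_dotProduct_mulVec, hUW, zero_mulVec, dotProduct_zero]
  have hsplit : (U * Vᵀ + W) *ᵥ x = U *ᵥ a + W *ᵥ y := by
    rw [add_mulVec, ← mulVec_mulVec, hWx]
  rw [hsplit, add_dotProduct, dotProduct_add, dotProduct_add, hUa, hcross,
    dotProduct_comm (W *ᵥ y), hcross]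
  linarith [hW y]

lemma diag_le_norm [DecidableEq n] (M : Matrix n n ℝ) (i : n) : M i i ≤ ‖M‖ := by
  set e := EuclideanSpace.single i (1 : ℝ)
  have he : ‖e‖ = 1 := by simp [e]
  calc M i i = inner ℝ e (toEuclideanCLM (𝕜 := ℝ) M e) := by
        rw [inner_toEuclideanCLM]; simp [e]
    _ ≤ ‖e‖ * ‖toEuclideanCLM (𝕜 := ℝ) M e‖ := real_inner_le_norm _ _
    _ ≤ ‖e‖ * (‖M‖ * ‖e‖) := by
        gcongr; exact (toEuclideanCLM (𝕜 := ℝ) M).le_opNorm e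
    _ = ‖M‖ := by rw [he, one_mul, mul_one]

lemma trace_mul_diagonal_le [DecidableEq n] (M : Matrix n n ℝ) {s : n → ℝ}
    (hs : ∀ i, 0 ≤ s i) : trace (M * diagonal s) ≤ ‖M‖ * ∑ i, s i := by
  rw [Finset.mul_sum]
  exact Finset.sum_le_sum fun i _ => by
    simpa [mul_diagonal] using mul_le_mul_of_nonneg_right (diag_le_norm M i) (hs i)

end Matrix

section Frobenius

variable {n : ℕ}

lemma frobInner_eq_sum (A B : Matrix (Fin n) (Fin n) ℝ) :
    frobInner A B = ∑ i, ∑ j, A i j * B i j := by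
  rw [frobInner, trace, Finset.sum_comm]
  simp [Matrix.mul_apply]

lemma frobInner_add_left (A B C : Matrix (Fin n) (Fin n) ℝ) :
    frobInner (A + B) C = frobInner A C + frobInner B C := by
  simp [frobInner, Matrix.add_mul, trace_add]

lemma frobInner_add_right (A B C : Matrix (Fin n) (Fin n) ℝ) :
    frobInner A (B + C) = frobInner A B + frobInner A C := by
  simp [frobInner, Matrix.mul_add, trace_add]

lemma frobInner_sub_right (A B C : Matrix (Fin n) (Fin n) ℝ) :
    frobInner A (B - C) = frobInner A B - frobInner A C := by
  simp [frobInner, Matrix.mul_sub, trace_sub]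

lemma frobInner_smul_left (c : ℝ) (A B : Matrix (Fin n) (Fin n) ℝ) :
    frobInner (c • A) B = c * frobInner A B := by
  simp [frobInner, trace_smul]

noncomputable def frobVec (A : Matrix (Fin n) (Fin n) ℝ) : EuclideanSpace ℝ (Fin n × Fin n) :=
  WithLp.toLp 2 fun p => A p.1 p.2

lemma frobVec_add (A B : Matrix (Fin n) (Fin n) ℝ) : frobVec (A + B) = frobVec A + frobVec B :=
  rfl

lemma inner_frobVec (A B : Matrix (Fin n) (Fin n) ℝ) :
    inner ℝ (frobVec A) (frobVec B) = frobInner A B := by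
  simp [frobVec, frobInner_eq_sum, PiLp.inner_apply, Fintype.sum_prod_type, mul_comm]

lemma norm_frobVec (A : Matrix (Fin n) (Fin n) ℝ) : ‖frobVec A‖ = frobNorm A := by
  simp [frobVec, frobNorm, EuclideanSpace.norm_eq, Fintype.sum_prod_type]

lemma frobNorm_nonneg (A : Matrix (Fin n) (Fin n) ℝ) : 0 ≤ frobNorm A := Real.sqrt_nonneg _

lemma l1Norm_nonneg (A : Matrix (Fin n) (Fin n) ℝ) : 0 ≤ l1Norm A :=
  Finset.sum_nonneg fun _ _ => Finset.sum_nonneg fun _ _ => abs_nonneg _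

lemma nuclearNorm_nonneg (A : Matrix (Fin n) (Fin n) ℝ) : 0 ≤ nuclearNorm A :=
  Finset.sum_nonneg fun _ _ => Real.sqrt_nonneg _

lemma abs_frobInner_le (A B : Matrix (Fin n) (Fin n) ℝ) :
    |frobInner A B| ≤ frobNorm A * frobNorm B := by
  simpa only [inner_frobVec, norm_frobVec] using abs_real_inner_le_norm (frobVec A) (frobVec B)

lemma frobNorm_add_le (A B : Matrix (Fin n) (Fin n) ℝ) :
    frobNorm (A + B) ≤ frobNorm A + frobNorm B := by
  simpa only [← norm_frobVec, frobVec_add] using norm_add_le (frobVec A) (frobVec B)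

lemma eq_zero_of_frobNorm_le_zero {A : Matrix (Fin n) (Fin n) ℝ} (h : frobNorm A ≤ 0) : A = 0 := by
  rw [← norm_frobVec, norm_le_zero_iff] at h
  ext i j
  simpa [frobVec] using congrArg (fun v => v.ofLp (i, j)) h

lemma frobNorm_le_l1Norm (A : Matrix (Fin n) (Fin n) ℝ) : frobNorm A ≤ l1Norm A := by
  have hsq : ∑ i, ∑ j, A i j ^ 2 ≤ l1Norm A ^ 2 := by
    simp only [l1Norm, ← sq_abs (A _ _), ← Fintype.sum_prod_type']
    exact Finset.sum_sq_le_sq_sum_of_nonneg fun p _ => abs_nonneg _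
  calc frobNorm A ≤ √(l1Norm A ^ 2) := Real.sqrt_le_sqrt hsq
    _ = l1Norm A := Real.sqrt_sq (l1Norm_nonneg A)

end Frobenius

section Spectral

variable {n : ℕ} (A : Matrix (Fin n) (Fin n) ℝ)

noncomputable def gramEigvecs : Matrix (Fin n) (Fin n) ℝ :=
  (isHermitian_conjTranspose_mul_self A).eigenvectorUnitary

noncomputable def gramEigvals : Fin n → ℝ :=
  (isHermitian_conjTranspose_mul_self A).eigenvalues

/-- `f (Aᵀ * A)`, computed from an orthogonal eigendecomposition of `Aᵀ * A`. -/
noncomputable def gramFun (f : ℝ → ℝ) : Matrix (Fin n) (Fin n) ℝ :=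
  gramEigvecs A * diagonal (f ∘ gramEigvals A) * (gramEigvecs A)ᵀ

lemma gramEigvals_nonneg (i : Fin n) : 0 ≤ gramEigvals A i :=
  (posSemidef_conjTranspose_mul_self A).eigenvalues_nonneg i

lemma transpose_gramEigvecs_mul : (gramEigvecs A)ᵀ * gramEigvecs A = 1 := by
  rw [← conjTranspose_eq_transpose_of_trivial, ← star_eq_conjTranspose]
  exact Unitary.coe_star_mul_self _

lemma gramEigvecs_mul_transpose : gramEigvecs A * (gramEigvecs A)ᵀ = 1 :=
  mul_eq_one_comm.mp (transpose_gramEigvecs_mul A)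

lemma gramFun_id : gramFun A id = Aᵀ * A := by
  rw [← conjTranspose_eq_transpose_of_trivial A,
    (isHermitian_conjTranspose_mul_self A).spectral_theorem, Unitary.conjStarAlgAut_apply,
    star_eq_conjTranspose]
  rfl

lemma gramFun_mul (f g : ℝ → ℝ) :
    gramFun A f * gramFun A g = gramFun A (fun x => f x * g x) := by
  simp only [gramFun, Matrix.mul_assoc]
  rw [← Matrix.mul_assoc (gramEigvecs A)ᵀ, transpose_gramEigvecs_mul, Matrix.one_mul,
    ← Matrix.mul_assoc (diagonal _), diagonal_mul_diagonal]
  rfl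

lemma gramFun_add (f g : ℝ → ℝ) :
    gramFun A (fun x => f x + g x) = gramFun A f + gramFun A g := by
  simp only [gramFun, ← Matrix.mul_add, ← Matrix.add_mul, diagonal_add]
  rfl

lemma gramFun_one : gramFun A (fun _ => 1) = 1 := by
  rw [gramFun, ← gramEigvecs_mul_transpose A]
  congr 1
  exact Matrix.mul_one _

lemma gramFun_zero : gramFun A (fun _ => 0) = 0 := by
  simp [gramFun, Function.comp_def]

lemma transpose_gramFun (f : ℝ → ℝ) : (gramFun A f)ᵀ = gramFun A f := by
  simp only [gramFun, transpose_mul, transpose_transpose, diagonal_transpose, Matrix.mul_assoc]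

lemma trace_gramFun (f : ℝ → ℝ) : trace (gramFun A f) = ∑ i, f (gramEigvals A i) := by
  rw [gramFun, trace_mul_cycle, transpose_gramEigvecs_mul, Matrix.one_mul, trace_diagonal]
  rfl

lemma gramFun_congr {f g : ℝ → ℝ} (h : ∀ x, 0 ≤ x → f x = g x) : gramFun A f = gramFun A g := by
  unfold gramFun
  congr 3
  funext i
  exact h _ (gramEigvals_nonneg A i)

lemma norm_gramFun_le_one {f : ℝ → ℝ} (hf : ∀ x, 0 ≤ x → |f x| ≤ 1) : ‖gramFun A f‖ ≤ 1 := by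
  have hPt : (gramEigvecs A)ᵀᵀ * (gramEigvecs A)ᵀ = 1 := by
    rw [transpose_transpose, gramEigvecs_mul_transpose]
  calc ‖gramFun A f‖ = ‖(gramEigvecs A)ᵀᵀ * diagonal (f ∘ gramEigvals A) * (gramEigvecs A)ᵀ‖ := by
        rw [transpose_transpose]; rfl
    _ ≤ ‖diagonal (f ∘ gramEigvals A)‖ := norm_transpose_mul_mul_le hPt hPt _
    _ ≤ 1 := by
        rw [l2_opNorm_diagonal, pi_norm_le_iff_of_nonneg zero_le_one]
        exact fun i => (Real.norm_eq_abs _).trans_le (hf _ (gramEigvals_nonneg A i))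

/-- The partial isometry `R` of the polar decomposition `A = R * gramFun A Real.sqrt`. Lean's
`(√0)⁻¹ = 0` makes it vanish on the kernel of `Aᵀ * A`, which is what gives `‖R‖ ≤ 1`. -/
noncomputable def polarPart : Matrix (Fin n) (Fin n) ℝ := A * gramFun A (fun x => (√x)⁻¹)

lemma transpose_polarPart_mul : (polarPart A)ᵀ * A = gramFun A Real.sqrt := by
  rw [polarPart, transpose_mul, transpose_gramFun, Matrix.mul_assoc, ← gramFun_id, gramFun_mul]
  exact gramFun_congr A fun x _ => (inv_mul_eq_div _ _).trans (Real.div_sqrt (x := x))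

lemma norm_polarPart_le_one : ‖polarPart A‖ ≤ 1 := by
  have hsq : ‖polarPart A‖ * ‖polarPart A‖ ≤ 1 := by
    rw [← l2_opNorm_conjTranspose_mul_self, conjTranspose_eq_transpose_of_trivial]
    nth_rw 2 [polarPart]
    rw [← Matrix.mul_assoc, transpose_polarPart_mul, gramFun_mul]
    refine norm_gramFun_le_one A fun x _ => ?_
    rcases eq_or_ne (√x) 0 with h | h <;> simp [h]
  nlinarith [norm_nonneg (polarPart A)]

lemma polarPart_mul_gramFun_sqrt : polarPart A * gramFun A Real.sqrt = A := by
  -- `g` is the indicator of the zero eigenvalue, and `(A g)ᵀ (A g) = g (Aᵀ A) g = 0`.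
  set g : ℝ → ℝ := fun x => 1 - (√x)⁻¹ * √x
  have hE : A * gramFun A g = 0 := by
    rw [← conjTranspose_mul_self_eq_zero, conjTranspose_eq_transpose_of_trivial, transpose_mul,
      transpose_gramFun, Matrix.mul_assoc, ← Matrix.mul_assoc Aᵀ, ← gramFun_id, gramFun_mul,
      gramFun_mul, ← gramFun_zero A]
    refine gramFun_congr A fun x hx => ?_
    rcases eq_or_ne (√x) 0 with h | h
    · simp [g, (Real.sqrt_eq_zero hx).1 h]
    · simp [g, h]
  calc polarPart A * gramFun A Real.sqrt
      = A * gramFun A (fun x => (√x)⁻¹ * √x) + A * gramFun A g := by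
        rw [hE, add_zero, polarPart, Matrix.mul_assoc, gramFun_mul]
    _ = A := by
        rw [← Matrix.mul_add, ← gramFun_add]
        simp only [g, add_sub_cancel, gramFun_one, Matrix.mul_one]

lemma polarPart_eq : polarPart A = A * gramFun A (fun x => (√x)⁻¹ * x⁻¹) * (Aᵀ * A) := by
  rw [polarPart, Matrix.mul_assoc, ← gramFun_id, gramFun_mul]
  refine congrArg _ (gramFun_congr A fun x _ => ?_)
  rcases eq_or_ne x 0 with rfl | hx
  · simp
  · simp [hx]

lemma frobInner_polarPart : frobInner (polarPart A) A = nuclearNorm A := by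
  rw [frobInner, transpose_polarPart_mul, trace_gramFun]
  rfl

end Spectral

theorem frobInner_le_norm_mul_nuclearNorm {n : ℕ} (Q A : Matrix (Fin n) (Fin n) ℝ) :
    frobInner Q A ≤ ‖Q‖ * nuclearNorm A := by
  -- With `A = R P D Pᵀ`, `⟨Q, A⟩ = tr (Pᵀ Qᵀ R P D)` and the diagonal entries of `Pᵀ Qᵀ R P` are
  -- at most `‖Q‖`.
  set P := gramEigvecs A
  set R := polarPart A
  have hA : Qᵀ * A = Qᵀ * R * P * diagonal (Real.sqrt ∘ gramEigvals A) * Pᵀ := by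
    conv_lhs => rw [← polarPart_mul_gramFun_sqrt A, gramFun]
    simp only [R, P, Matrix.mul_assoc]
  have hR : ‖Qᵀ * R‖ ≤ ‖Q‖ := by
    calc ‖Qᵀ * R‖ ≤ ‖Qᵀ‖ * ‖R‖ := l2_opNorm_mul _ _
      _ ≤ ‖Q‖ * 1 := by
        rw [← conjTranspose_eq_transpose_of_trivial, l2_opNorm_conjTranspose]
        gcongr
        exact norm_polarPart_le_one A
      _ = ‖Q‖ := mul_one _
  calc frobInner Q A = trace (Pᵀ * (Qᵀ * R) * P * diagonal (Real.sqrt ∘ gramEigvals A)) := by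
        rw [frobInner, hA, trace_mul_comm]
        simp only [Matrix.mul_assoc]
    _ ≤ ‖Pᵀ * (Qᵀ * R) * P‖ * nuclearNorm A :=
        trace_mul_diagonal_le _ fun i => Real.sqrt_nonneg _
    _ ≤ ‖Q‖ * nuclearNorm A := by
        gcongr
        · exact nuclearNorm_nonneg A
        · exact (norm_transpose_mul_mul_le (transpose_gramEigvecs_mul A)
            (transpose_gramEigvecs_mul A) (Qᵀ * R)).trans hR

/-- The dual matrix has the form `A * X * A`, so it inherits the left and right annihilators
of `A`. -/
theorem exists_frobInner_eq_nuclearNorm {n : ℕ} (A : Matrix (Fin n) (Fin n) ℝ) :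
    ∃ X, ‖A * X * A‖ ≤ 1 ∧ frobInner (A * X * A) A = nuclearNorm A := by
  refine ⟨gramFun A (fun x => (√x)⁻¹ * x⁻¹) * Aᵀ, ?_⟩
  have h : A * (gramFun A (fun x => (√x)⁻¹ * x⁻¹) * Aᵀ) * A = polarPart A := by
    rw [polarPart_eq]; simp only [Matrix.mul_assoc]
  rw [h]
  exact ⟨norm_polarPart_le_one A, frobInner_polarPart A⟩

lemma frobNorm_le_nuclearNorm {n : ℕ} (A : Matrix (Fin n) (Fin n) ℝ) : frobNorm A ≤ nuclearNorm A := by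
  have hsum : ∑ i, ∑ j, A i j ^ 2 = ∑ i, √(gramEigvals A i) ^ 2 := by
    calc ∑ i, ∑ j, A i j ^ 2 = trace (gramFun A id) := by
          rw [gramFun_id, ← frobInner, frobInner_eq_sum]; simp only [sq]
      _ = ∑ i, √(gramEigvals A i) ^ 2 := by
          rw [trace_gramFun]
          exact Finset.sum_congr rfl fun i _ => (Real.sq_sqrt (gramEigvals_nonneg A i)).symm
  calc frobNorm A = √(∑ i, √(gramEigvals A i) ^ 2) := by rw [frobNorm, hsum]
    _ ≤ √(nuclearNorm A ^ 2) :=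
        Real.sqrt_le_sqrt (Finset.sum_sq_le_sq_sum_of_nonneg fun i _ => Real.sqrt_nonneg _)
    _ = nuclearNorm A := Real.sqrt_sq (nuclearNorm_nonneg A)

section Tangent

variable {n r : ℕ} {U V : Matrix (Fin n) (Fin r) ℝ}

lemma transpose_mul_sub_projT (hU : Uᵀ * U = 1) (M : Matrix (Fin n) (Fin n) ℝ) :
    Uᵀ * (M - projT U V M) = 0 := by
  simp only [projT, Matrix.mul_sub, Matrix.mul_add, ← Matrix.mul_assoc, hU, Matrix.one_mul]
  abel

lemma sub_projT_mul (hV : Vᵀ * V = 1) (M : Matrix (Fin n) (Fin n) ℝ) :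
    (M - projT U V M) * V = 0 := by
  simp only [projT, Matrix.sub_mul, Matrix.add_mul, Matrix.mul_assoc, hV, Matrix.mul_one]
  abel

lemma frobInner_mul_eq_zero {Q : Matrix (Fin n) (Fin n) ℝ} (hUQ : Uᵀ * Q = 0)
    (X : Matrix (Fin r) (Fin n) ℝ) : frobInner Q (U * X) = 0 := by
  rw [frobInner, ← Matrix.mul_assoc, ← transpose_transpose U, ← transpose_mul,
    hUQ, transpose_zero, Matrix.zero_mul, trace_zero]

lemma frobInner_mul_transpose_eq_zero {Q : Matrix (Fin n) (Fin n) ℝ} (hQV : Q * V = 0)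
    (X : Matrix (Fin n) (Fin r) ℝ) : frobInner Q (X * Vᵀ) = 0 := by
  rw [frobInner, ← Matrix.mul_assoc, trace_mul_comm, ← Matrix.mul_assoc, ← transpose_mul, hQV,
    transpose_zero, Matrix.zero_mul, trace_zero]

lemma frobInner_projT_eq_zero {Q : Matrix (Fin n) (Fin n) ℝ} (hUQ : Uᵀ * Q = 0) (hQV : Q * V = 0)
    (M : Matrix (Fin n) (Fin n) ℝ) : frobInner Q (projT U V M) = 0 := by
  have h : projT U V M = U * (Uᵀ * M - Uᵀ * M * (V * Vᵀ)) + M * V * Vᵀ := by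
    simp only [projT, Matrix.mul_sub, Matrix.mul_assoc]; abel
  rw [h, frobInner_add_right, frobInner_mul_eq_zero hUQ, frobInner_mul_transpose_eq_zero hQV,
    add_zero]

end Tangent

section Support

variable {n : ℕ} {Ω : Set (Fin n × Fin n)} [DecidablePred (· ∈ Ω)]

lemma projSupp_add (A B : Matrix (Fin n) (Fin n) ℝ) :
    projSupp Ω (A + B) = projSupp Ω A + projSupp Ω B := by
  ext i j
  by_cases h : (i, j) ∈ Ω <;> simp [projSupp, h]

lemma frobInner_projSupp_left (A B : Matrix (Fin n) (Fin n) ℝ) :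
    frobInner (projSupp Ω A) B = frobInner A (projSupp Ω B) := by
  simp only [frobInner_eq_sum, projSupp, of_apply, ite_mul, mul_ite, zero_mul, mul_zero]

lemma frobNorm_projSupp_le (A : Matrix (Fin n) (Fin n) ℝ) :
    frobNorm (projSupp Ω A) ≤ frobNorm A := by
  refine Real.sqrt_le_sqrt (Finset.sum_le_sum fun i _ => Finset.sum_le_sum fun j _ => ?_)
  by_cases h : (i, j) ∈ Ω <;> simp [projSupp, h, sq_nonneg]

lemma neg_frobInner_le_mul_l1Norm {F : Matrix (Fin n) (Fin n) ℝ} {c : ℝ} (hF : ∀ i j, |F i j| ≤ c)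
    (A : Matrix (Fin n) (Fin n) ℝ) : -frobInner F A ≤ c * l1Norm A := by
  rw [frobInner_eq_sum, l1Norm, Finset.mul_sum, ← Finset.sum_neg_distrib]
  refine Finset.sum_le_sum fun i _ => ?_
  rw [Finset.mul_sum, ← Finset.sum_neg_distrib]
  refine Finset.sum_le_sum fun j _ => ?_
  calc -(F i j * A i j) ≤ |F i j| * |A i j| := by rw [← abs_mul]; exact neg_le_abs _
    _ ≤ c * |A i j| := mul_le_mul_of_nonneg_right (hF i j) (abs_nonneg _)

lemma abs_sub_sign_mul_le (s h : ℝ) : |s| - Real.sign s * h ≤ |s - h| := by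
  rcases lt_trichotomy s 0 with hs | rfl | hs
  · rw [Real.sign_of_neg hs, abs_of_neg hs]; linarith [neg_abs_le (s - h)]
  · simp
  · rw [Real.sign_of_pos hs, abs_of_pos hs]; linarith [le_abs_self (s - h)]

lemma l1Norm_sub_ge {S₀ : Matrix (Fin n) (Fin n) ℝ} (hΩ : Ω = {p | S₀ p.1 p.2 ≠ 0})
    (H : Matrix (Fin n) (Fin n) ℝ) :
    l1Norm S₀ - frobInner (signMatrix S₀) H + l1Norm (H - projSupp Ω H) ≤ l1Norm (S₀ - H) := by
  simp only [l1Norm, frobInner_eq_sum, ← Finset.sum_sub_distrib, ← Finset.sum_add_distrib]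
  refine Finset.sum_le_sum fun i _ => Finset.sum_le_sum fun j _ => ?_
  by_cases h : (i, j) ∈ Ω
  · simpa [projSupp, h, signMatrix] using abs_sub_sign_mul_le (S₀ i j) (H i j)
  · have hS : S₀ i j = 0 := by simpa [hΩ] using h
    simp [projSupp, h, signMatrix, hS]

end Support

section Certificate

variable {n r : ℕ} {U V : Matrix (Fin n) (Fin r) ℝ}

lemma nuclearNorm_mul_mul_transpose_le_trace (hU : Uᵀ * U = 1) (hV : Vᵀ * V = 1)
    {Sig : Matrix (Fin r) (Fin r) ℝ} (hSigdiag : ∀ i j, i ≠ j → Sig i j = 0)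
    (hSig : ∀ i, 0 ≤ Sig i i) : nuclearNorm (U * Sig * Vᵀ) ≤ trace Sig := by
  obtain ⟨X, hQ, hQA⟩ := exists_frobInner_eq_nuclearNorm (U * Sig * Vᵀ)
  set Q := U * Sig * Vᵀ * X * (U * Sig * Vᵀ)
  have hdiag : Sig = diagonal fun i => Sig i i := by
    ext i j
    by_cases h : i = j
    · simp [h]
    · simp [h, hSigdiag i j h]
  have hQt : ‖Vᵀ * Qᵀ * U‖ ≤ 1 := by
    refine (norm_transpose_mul_mul_le hV hU Qᵀ).trans ?_
    rwa [← conjTranspose_eq_transpose_of_trivial, l2_opNorm_conjTranspose]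
  calc nuclearNorm (U * Sig * Vᵀ) = trace (Vᵀ * Qᵀ * U * diagonal fun i => Sig i i) := by
        rw [← hQA, frobInner, ← hdiag, ← Matrix.mul_assoc, trace_mul_comm]
        simp only [Matrix.mul_assoc]
    _ ≤ ‖Vᵀ * Qᵀ * U‖ * ∑ i, Sig i i := trace_mul_diagonal_le _ hSig
    _ ≤ trace Sig := by
        rw [trace]
        exact mul_le_of_le_one_left (Finset.sum_nonneg fun i _ => hSig i) hQt

lemma frobInner_mul_transpose_mul_mul_transpose (hU : Uᵀ * U = 1) (hV : Vᵀ * V = 1)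
    (Sig : Matrix (Fin r) (Fin r) ℝ) : frobInner (U * Vᵀ) (U * Sig * Vᵀ) = trace Sig := by
  rw [frobInner, transpose_mul, transpose_transpose, Matrix.mul_assoc, ← Matrix.mul_assoc Uᵀ,
    ← Matrix.mul_assoc Uᵀ, hU, Matrix.one_mul, trace_mul_comm, Matrix.mul_assoc, hV,
    Matrix.mul_one]

theorem nuclearNorm_add_ge (hU : Uᵀ * U = 1) (hV : Vᵀ * V = 1) {Sig : Matrix (Fin r) (Fin r) ℝ}
    (hSigdiag : ∀ i j, i ≠ j → Sig i j = 0) (hSig : ∀ i, 0 ≤ Sig i i)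
    (H : Matrix (Fin n) (Fin n) ℝ) :
    nuclearNorm (U * Sig * Vᵀ) + frobInner (U * Vᵀ) H + nuclearNorm (H - projT U V H)
      ≤ nuclearNorm (U * Sig * Vᵀ + H) := by
  -- `U Vᵀ + W₀` is a subgradient of the nuclear norm at `U Sig Vᵀ` adapted to `H`.
  set Ht := H - projT U V H
  obtain ⟨X, hXn, hXeq⟩ := exists_frobInner_eq_nuclearNorm Ht
  set W₀ := Ht * X * Ht
  have hUW₀ : Uᵀ * W₀ = 0 := by
    simp only [W₀, ← Matrix.mul_assoc, transpose_mul_sub_projT hU, Matrix.zero_mul, Ht]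
  have hW₀V : W₀ * V = 0 := by
    simp only [W₀, Matrix.mul_assoc, sub_projT_mul hV, Matrix.mul_zero, Ht]
  have hdual : frobInner (U * Vᵀ + W₀) (U * Sig * Vᵀ + H) ≤ nuclearNorm (U * Sig * Vᵀ + H) :=
    (frobInner_le_norm_mul_nuclearNorm _ _).trans <| mul_le_of_le_one_left (nuclearNorm_nonneg _)
      (norm_mul_transpose_add_le_one hU hV hUW₀ hW₀V hXn)
  have hW₀L : frobInner W₀ (U * Sig * Vᵀ) = 0 := by
    rw [Matrix.mul_assoc]; exact frobInner_mul_eq_zero hUW₀ _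
  have hW₀H : frobInner W₀ H = nuclearNorm Ht := by
    conv_lhs => rw [← sub_add_cancel H (projT U V H)]
    rw [frobInner_add_right, frobInner_projT_eq_zero hUW₀ hW₀V, add_zero, ← hXeq]
  have hL := nuclearNorm_mul_mul_transpose_le_trace hU hV hSigdiag hSig
  have hUV := frobInner_mul_transpose_mul_mul_transpose hU hV Sig
  rw [frobInner_add_left, frobInner_add_right, frobInner_add_right] at hdual
  linarith

variable {Ω : Set (Fin n × Fin n)} [DecidablePred (· ∈ Ω)]

lemma frobInner_mul_transpose_ge_of_certificate {S₀ W F Δ : Matrix (Fin n) (Fin n) ℝ}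
    {lam α ε : ℝ} (hU : Uᵀ * U = 1) (hV : Vᵀ * V = 1) (hlam : 0 ≤ lam)
    (hWT : projT U V W = 0) (hWnorm : matSpectralNorm W ≤ α)
    (hFΩ : projSupp Ω F = 0) (hFnorm : ∀ i j, |F i j| ≤ 1 / 2)
    (hΔΩ : projSupp Ω Δ = Δ) (hΔF : frobNorm Δ ≤ ε ^ 2)
    (hcert : U * Vᵀ + W = lam • (signMatrix S₀ + F + Δ)) (H : Matrix (Fin n) (Fin n) ℝ) :
    lam * frobInner (signMatrix S₀) H - α * nuclearNorm (H - projT U V H)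
      - lam / 2 * l1Norm (H - projSupp Ω H) - lam * ε ^ 2 * frobNorm (projSupp Ω H)
      ≤ frobInner (U * Vᵀ) H := by
  have hUW : Uᵀ * W = 0 := by simpa [hWT] using transpose_mul_sub_projT (V := V) hU W
  have hWV : W * V = 0 := by simpa [hWT] using sub_projT_mul (U := U) hV W
  have hW : frobInner W H ≤ α * nuclearNorm (H - projT U V H) := by
    rw [← sub_zero (frobInner W H), ← frobInner_projT_eq_zero hUW hWV H, ← frobInner_sub_right]
    exact (frobInner_le_norm_mul_nuclearNorm _ _).trans
      (mul_le_mul_of_nonneg_right hWnorm (nuclearNorm_nonneg _))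
  have hF : -frobInner F H ≤ 1 / 2 * l1Norm (H - projSupp Ω H) := by
    have hFH : frobInner F (projSupp Ω H) = 0 := by
      rw [← frobInner_projSupp_left, hFΩ]; simp [frobInner]
    rw [← sub_zero (frobInner F H), ← hFH, ← frobInner_sub_right]
    exact neg_frobInner_le_mul_l1Norm hFnorm _
  have hΔ : -frobInner Δ H ≤ ε ^ 2 * frobNorm (projSupp Ω H) := by
    rw [← hΔΩ, frobInner_projSupp_left]
    exact (neg_le_abs _).trans ((abs_frobInner_le _ _).trans
      (mul_le_mul_of_nonneg_right hΔF (frobNorm_nonneg _)))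
  have hpair : frobInner (U * Vᵀ) H + frobInner W H
      = lam * (frobInner (signMatrix S₀) H + frobInner F H + frobInner Δ H) := by
    rw [← frobInner_add_left, hcert, frobInner_smul_left, frobInner_add_left, frobInner_add_left]
  linarith [mul_le_mul_of_nonneg_left hF hlam, mul_le_mul_of_nonneg_left hΔ hlam]

lemma mul_frobNorm_projSupp_le {ε : ℝ} (hε : ε ≤ 1)
    (hPP : ∀ M : Matrix (Fin n) (Fin n) ℝ,
      frobNorm (projSupp Ω (projT U V M)) ≤ (1 - ε) * frobNorm M)
    (H : Matrix (Fin n) (Fin n) ℝ) :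
    ε * frobNorm (projSupp Ω H)
      ≤ (1 - ε) * l1Norm (H - projSupp Ω H) + nuclearNorm (H - projT U V H) := by
  have hΩH : frobNorm (projSupp Ω H) ≤ (1 - ε) * frobNorm H + nuclearNorm (H - projT U V H) :=
    calc frobNorm (projSupp Ω H)
        = frobNorm (projSupp Ω (projT U V H) + projSupp Ω (H - projT U V H)) := by
          rw [← projSupp_add, add_sub_cancel]
      _ ≤ frobNorm (projSupp Ω (projT U V H)) + frobNorm (projSupp Ω (H - projT U V H)) :=
          frobNorm_add_le _ _
      _ ≤ (1 - ε) * frobNorm H + nuclearNorm (H - projT U V H) :=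
          add_le_add (hPP H) ((frobNorm_projSupp_le _).trans (frobNorm_le_nuclearNorm _))
  have hH : frobNorm H ≤ frobNorm (projSupp Ω H) + l1Norm (H - projSupp Ω H) :=
    calc frobNorm H = frobNorm (projSupp Ω H + (H - projSupp Ω H)) := by rw [add_sub_cancel]
      _ ≤ frobNorm (projSupp Ω H) + frobNorm (H - projSupp Ω H) := frobNorm_add_le _ _
      _ ≤ frobNorm (projSupp Ω H) + l1Norm (H - projSupp Ω H) :=
          add_le_add_right (frobNorm_le_l1Norm _) _
  nlinarith [mul_le_mul_of_nonneg_left hH (sub_nonneg.2 hε)]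

lemma nuclearNorm_pos_or_l1Norm_pos {ε : ℝ} (hε : 0 < ε)
    (hPP : ∀ M : Matrix (Fin n) (Fin n) ℝ,
      frobNorm (projSupp Ω (projT U V M)) ≤ (1 - ε) * frobNorm M)
    {H : Matrix (Fin n) (Fin n) ℝ} (hH : H ≠ 0) :
    0 < nuclearNorm (H - projT U V H) ∨ 0 < l1Norm (H - projSupp Ω H) := by
  by_contra! h
  have hT : projT U V H = H :=
    (sub_eq_zero.1 (eq_zero_of_frobNorm_le_zero ((frobNorm_le_nuclearNorm _).trans h.1))).symm
  have hΩ : projSupp Ω H = H :=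
    (sub_eq_zero.1 (eq_zero_of_frobNorm_le_zero ((frobNorm_le_l1Norm _).trans h.2))).symm
  have hPH := hPP H
  rw [hT, hΩ] at hPH
  exact hH (eq_zero_of_frobNorm_le_zero (by nlinarith [frobNorm_nonneg H]))

end Certificate

theorem pcp_dual_certificate_general {n r : ℕ}
    (L₀ S₀ : Matrix (Fin n) (Fin n) ℝ)
    (U V : Matrix (Fin n) (Fin r) ℝ) (Sig : Matrix (Fin r) (Fin r) ℝ)
    (hU : Uᵀ * U = 1) (hV : Vᵀ * V = 1)
    (hSigdiag : ∀ i j, i ≠ j → Sig i j = 0) (hSigpos : ∀ i, 0 < Sig i i)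
    (hSVD : L₀ = U * Sig * Vᵀ)
    (Ω : Set (Fin n × Fin n)) [DecidablePred (· ∈ Ω)]
    (hΩ : Ω = {p : Fin n × Fin n | S₀ p.1 p.2 ≠ 0})
    (lam α ε : ℝ)
    (hε : ε ∈ Set.Ioo (0:ℝ) 1)
    (hlam : 0 < lam)
    (hεq : (1:ℝ)/2 - (1 - ε) * ε > 0) (hαε : (1 - α) - lam * ε > 0)
    -- ‖P_Ω P_T‖ ≤ 1 - ε (as operators in the Frobenius norm)
    (hPP : ∀ M : Matrix (Fin n) (Fin n) ℝ,
      frobNorm (projSupp Ω (projT U V M)) ≤ (1 - ε) * frobNorm M)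
    -- the dual certificate (W, F) and the residual Δ
    (W F Δ : Matrix (Fin n) (Fin n) ℝ)
    (hWT : projT U V W = 0) (hWnorm : matSpectralNorm W ≤ α)
    (hFΩ : projSupp Ω F = 0) (hFnorm : ∀ i j, |F i j| ≤ 1/2)
    (hΔΩ : projSupp Ω Δ = Δ) (hΔF : frobNorm Δ ≤ ε ^ 2)
    (hcert : U * Vᵀ + W = lam • (signMatrix S₀ + F + Δ)) :
    ∀ L S : Matrix (Fin n) (Fin n) ℝ, L + S = L₀ + S₀ →
      (L, S) ≠ (L₀, S₀) →
      nuclearNorm L₀ + lam * l1Norm S₀ < nuclearNorm L + lam * l1Norm S := by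
  intro L S hsum hne
  set H := L - L₀
  have hL : L = L₀ + H := (add_sub_cancel L₀ L).symm
  have hS : S = S₀ - H := by
    rw [← add_sub_cancel_left L S, hsum]; simp only [H]; abel
  have hH : H ≠ 0 := fun h => hne (by rw [hL, hS, h, add_zero, sub_zero])
  have hgap : 0 < (1 - α - lam * ε) * nuclearNorm (H - projT U V H)
      + lam * (1 / 2 - (1 - ε) * ε) * l1Norm (H - projSupp Ω H) := by
    have ha := nuclearNorm_nonneg (H - projT U V H)
    have hb := l1Norm_nonneg (H - projSupp Ω H)
    rcases nuclearNorm_pos_or_l1Norm_pos hε.1 hPP hH with ha' | hb'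
    · nlinarith [mul_pos hαε ha', mul_nonneg (mul_pos hlam hεq).le hb]
    · nlinarith [mul_nonneg hαε.le ha, mul_pos (mul_pos hlam hεq) hb']
  subst hSVD
  rw [hL, hS]
  linarith [nuclearNorm_add_ge hU hV hSigdiag (fun i => (hSigpos i).le) H,
    mul_le_mul_of_nonneg_left (l1Norm_sub_ge hΩ H) hlam.le,
    frobInner_mul_transpose_ge_of_certificate hU hV hlam.le hWT hWnorm hFΩ hFnorm hΔΩ hΔF hcert H,
    mul_le_mul_of_nonneg_left (mul_frobNorm_projSupp_le hε.2.le hPP H) (mul_nonneg hlam.le hε.1.le)]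

/-- dual certificate optimality for Principal Component Pursuit. -/
theorem pcp_dual_certificate {n r : ℕ}
    (L₀ S₀ : Matrix (Fin n) (Fin n) ℝ)
    (U V : Matrix (Fin n) (Fin r) ℝ) (Sig : Matrix (Fin r) (Fin r) ℝ)
    (hU : Uᵀ * U = 1) (hV : Vᵀ * V = 1)
    (hSigdiag : ∀ i j, i ≠ j → Sig i j = 0) (hSigpos : ∀ i, 0 < Sig i i)
    (hSVD : L₀ = U * Sig * Vᵀ)
    (Ω : Set (Fin n × Fin n)) [DecidablePred (· ∈ Ω)]
    (hΩ : Ω = {p : Fin n × Fin n | S₀ p.1 p.2 ≠ 0})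
    (lam α ε : ℝ)
    (hα : α ∈ Set.Ioo (0:ℝ) 1) (hε : ε ∈ Set.Ioo (0:ℝ) 1)
    (hlam : 0 < lam) (hlamα : lam < 1 - α)
    (hεq : (1:ℝ)/2 - (1 - ε) * ε > 0) (hαε : (1 - α) - lam * ε > 0)
    -- ‖P_Ω P_T‖ ≤ 1 - ε (as operators in the Frobenius norm)
    (hPP : ∀ M : Matrix (Fin n) (Fin n) ℝ,
      frobNorm (projSupp Ω (projT U V M)) ≤ (1 - ε) * frobNorm M)
    -- the dual certificate (W, F) and the residual Δ
    (W F Δ : Matrix (Fin n) (Fin n) ℝ)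
    (hWT : projT U V W = 0) (hWnorm : matSpectralNorm W ≤ α)
    (hFΩ : projSupp Ω F = 0) (hFnorm : ∀ i j, |F i j| ≤ 1/2)
    (hΔΩ : projSupp Ω Δ = Δ) (hΔF : frobNorm Δ ≤ ε ^ 2)
    (hcert : U * Vᵀ + W = lam • (signMatrix S₀ + F + Δ)) :
    ∀ L S : Matrix (Fin n) (Fin n) ℝ, L + S = L₀ + S₀ →
      (L, S) ≠ (L₀, S₀) →
      nuclearNorm L₀ + lam * l1Norm S₀ < nuclearNorm L + lam * l1Norm S :=
  pcp_dual_certificate_general L₀ S₀ U V Sig hU hV hSigdiag hSigpos hSVD Ω hΩ lam α ε hε hlam hεq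
    hαε hPP W F Δ hWT hWnorm hFΩ hFnorm hΔΩ hΔF hcert
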